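/- Let (μ̂_k)_{k=1}^m and (μ_k)_{k=1}^m be reals and (r_k), (r̄_k) positive reals with |μ̂_k - μ_k| ≤ r_k and r_k ≤ r̄_k for all k. Then ∑_{k=1}^m (μ̂_k·𝟙{|μ̂_k| > 2r̄_k} - μ_k·𝟙{|μ_k| > r_k})² ≤ 9 ∑_{k=1}^m r̄_k² · 𝟙{|μ_k| ≥ r_k}. -/

import Mathlib

/-!
Coordinatewise: two hard thresholds at levels `s` and `t` differ by at most `max s t + |a - b|`,
since a coordinate kept by only one of them is small for the other threshold. If `|μ_k| < r_k`
then `|μ̂_k| < 2 r_k ≤ 2 r̄_k`, so both thresholds vanish; otherwise the difference is at most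
`2 r̄_k + r_k ≤ 3 r̄_k`. Squaring and summing gives the claim.
-/

noncomputable def hardThreshold (t x : ℝ) : ℝ := if t < |x| then x else 0

theorem hardThreshold_eq_zero_of_abs_le {t x : ℝ} (h : |x| ≤ t) : hardThreshold t x = 0 :=
  if_neg h.not_gt

theorem abs_hardThreshold_sub_hardThreshold_le {s t : ℝ} (a b : ℝ) (ht : 0 ≤ t) :
    |hardThreshold s a - hardThreshold t b| ≤ max s t + |a - b| := by
  have hab : |a| ≤ |b| + |a - b| := by
    linarith [abs_sub_abs_le_abs_sub a b]
  have hba : |b| ≤ |a| + |a - b| := by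
    linarith [abs_sub_abs_le_abs_sub b a, abs_sub_comm a b]
  unfold hardThreshold
  split_ifs with ha hb hb
  · linarith [le_max_right s t]
  · rw [sub_zero]
    linarith [le_max_right s t]
  · rw [zero_sub, abs_neg]
    linarith [le_max_left s t]
  · rw [sub_zero, abs_zero]
    linarith [le_max_left s t, abs_nonneg a, abs_nonneg (a - b)]

theorem abs_hardThreshold_sub_hardThreshold_le_indicator {a b r rbar : ℝ}
    (hab : |a - b| ≤ r) (hr : r ≤ rbar) :
    |hardThreshold (2 * rbar) a - hardThreshold r b| ≤
      3 * rbar * (if r ≤ |b| then 1 else 0) := by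
  have hr0 : 0 ≤ r := (abs_nonneg _).trans hab
  split_ifs with hb
  · calc |hardThreshold (2 * rbar) a - hardThreshold r b|
          ≤ max (2 * rbar) r + |a - b| := abs_hardThreshold_sub_hardThreshold_le _ _ hr0
        _ ≤ 3 * rbar * 1 := by
          have : max (2 * rbar) r ≤ 2 * rbar := max_le le_rfl (by linarith)
          linarith
  · have hb : |b| < r := not_le.mp hb
    have ha : |a| ≤ 2 * rbar := by
      linarith [abs_sub_abs_le_abs_sub a b]
    rw [hardThreshold_eq_zero_of_abs_le ha, hardThreshold_eq_zero_of_abs_le hb.le]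
    simp

theorem stmt_18_general (m : ℕ) (μhat μ r rbar : Fin m → ℝ)
    (h1 : ∀ k, |μhat k - μ k| ≤ r k) (h2 : ∀ k, r k ≤ rbar k) :
    ∑ k, ((if 2 * rbar k < |μhat k| then μhat k else 0) -
        (if r k < |μ k| then μ k else 0)) ^ 2 ≤
      9 * ∑ k, (rbar k) ^ 2 * (if r k ≤ |μ k| then 1 else 0) := by
  rw [Finset.mul_sum]
  refine Finset.sum_le_sum fun k _ => ?_
  have hk := abs_le.mp (abs_hardThreshold_sub_hardThreshold_le_indicator (h1 k) (h2 k))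
  calc (hardThreshold (2 * rbar k) (μhat k) - hardThreshold (r k) (μ k)) ^ 2
        ≤ (3 * rbar k * (if r k ≤ |μ k| then 1 else 0)) ^ 2 := sq_le_sq' hk.1 hk.2
      _ = 9 * (rbar k ^ 2 * (if r k ≤ |μ k| then 1 else 0)) := by split_ifs <;> ring

theorem stmt_18 (m : ℕ) (μhat μ r rbar : Fin m → ℝ)
    (hr : ∀ k, 0 < r k) (hrbar : ∀ k, 0 < rbar k)
    (h1 : ∀ k, |μhat k - μ k| ≤ r k) (h2 : ∀ k, r k ≤ rbar k) :
    ∑ k, ((if 2 * rbar k < |μhat k| then μhat k else 0) -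
        (if r k < |μ k| then μ k else 0)) ^ 2 ≤
      9 * ∑ k, (rbar k) ^ 2 * (if r k ≤ |μ k| then 1 else 0) :=
  stmt_18_general m μhat μ r rbar h1 h2
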